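/- Let Q be a finite quiver, let D = dA with d ≥ 2 and A ≥ 1, and let ρ be a set of paths of Q satisfying the (D,A)-overlap property. If c is a closed path of length A with c^d ∈ ρ, then c is not a proper power: there is no path p and integer r ≥ 2 with c = p^r. -/
import Mathlib


open Quiver

universe u v

variable {V : Type u} [Quiver.{v + 1} V]

/-- The type of paths of a quiver, bundled with their endpoints. -/
abbrev SPath (V : Type u) [Quiver.{v + 1} V] := Σ a b : V, Quiver.Path a b

/-- The type of arrows of a quiver, bundled with their endpoints. -/
abbrev SArrow (V : Type u) [Quiver.{v + 1} V] := Σ a b : V, a ⟶ b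

/-- A set of paths in a quiver, given as a predicate on paths with arbitrary endpoints. -/
abbrev PathSet (V : Type u) [Quiver.{v + 1} V] := ∀ ⦃a b : V⦄, Quiver.Path a b → Prop

/-- `p` is a prefix of `q`. -/
def IsPrefixP {a b c : V} (p : Quiver.Path a b) (q : Quiver.Path a c) : Prop :=
  ∃ p' : Quiver.Path b c, q = p.comp p'

/-- `p` is a suffix of `q`. -/
def IsSuffixP {a b c : V} (p : Quiver.Path b c) (q : Quiver.Path a c) : Prop :=
  ∃ p' : Quiver.Path a b, q = p'.comp p

/-- `p` is a subpath of `q`. -/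
def IsSubpathP {b c a e : V} (p : Quiver.Path b c) (q : Quiver.Path a e) : Prop :=
  ∃ (u : Quiver.Path a b) (v : Quiver.Path c e), q = (u.comp p).comp v

/-- `q` overlaps `p` with overlap `p.comp u`: there are paths `u`, `v` with
`pu = vq` and `1 ≤ ℓ(u) < ℓ(q)`. -/
def OverlapsWith {x y a b : V} (q : Quiver.Path x y) (p : Quiver.Path a b)
    (u : Quiver.Path b y) : Prop :=
  ∃ v : Quiver.Path a x, p.comp u = v.comp q ∧ 1 ≤ u.length ∧ u.length < q.length

/-- `q` properly overlaps `p` with overlap `p.comp u`: additionally `ℓ(v) ≥ 1`. -/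
def ProperlyOverlapsWith {x y a b : V} (q : Quiver.Path x y) (p : Quiver.Path a b)
    (u : Quiver.Path b y) : Prop :=
  ∃ v : Quiver.Path a x, p.comp u = v.comp q ∧ 1 ≤ u.length ∧ u.length < q.length ∧
    1 ≤ v.length

/-- `q` properly overlaps `p` (with some overlap). -/
def ProperlyOverlaps {x y a b : V} (q : Quiver.Path x y) (p : Quiver.Path a b) : Prop :=
  ∃ u : Quiver.Path b y, ProperlyOverlapsWith q p u

/-- `ρ` is `d`-covering: whenever `pq ∈ ρ`, `qr ∈ ρ` and `ℓ(q) ≥ 1`, every subpath of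
`pqr` of length `d` lies in `ρ`. -/
def DCovering (d : ℕ) (ρ : PathSet V) : Prop :=
  ∀ ⦃a b c e : V⦄ (p : Quiver.Path a b) (q : Quiver.Path b c) (r : Quiver.Path c e),
    ρ (p.comp q) → ρ (q.comp r) → 1 ≤ q.length →
    ∀ ⦃x y : V⦄ (s : Quiver.Path x y), s.length = d →
      IsSubpathP s ((p.comp q).comp r) → ρ s

/-- The sets `R^n` of (iterated maximal) overlaps: `R^0` = trivial paths, `R^1` = arrows,
`R^2 = ρ`, and for `n ≥ 3`, `R^n` consists of the paths `R^{n-1}u` where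
`R^{n-1} = R^{n-2}p ∈ R^{n-1}`, some element of `ρ` overlaps `p` with overlap `pu`,
and no element of `ρ` overlaps `p` with overlap a proper prefix of `pu`. -/
def RSet (ρ : PathSet V) : ℕ → PathSet V
  | 0 => fun _ _ p => p.length = 0
  | 1 => fun _ _ p => p.length = 1
  | 2 => ρ
  | n + 3 => fun a e R =>
      ∃ (c : V) (Rp : Quiver.Path a c) (u : Quiver.Path c e),
        RSet ρ (n + 2) Rp ∧ R = Rp.comp u ∧
        ∃ (b : V) (Rpp : Quiver.Path a b) (p : Quiver.Path b c),
          RSet ρ (n + 1) Rpp ∧ Rp = Rpp.comp p ∧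
          (∃ (x : V) (q : Quiver.Path x e), ρ q ∧ OverlapsWith q p u) ∧
          ∀ (x y : V) (q : Quiver.Path x y) (u' : Quiver.Path c y),
            ρ q → OverlapsWith q p u' →
            ¬(IsPrefixP (p.comp u') (p.comp u) ∧ u'.length < u.length)

/-- `δ(n) = (n/2)d` if `n` is even, `((n-1)/2)d + 1` if `n` is odd. -/
def deltaF (d n : ℕ) : ℕ := if n % 2 = 0 then n / 2 * d else (n - 1) / 2 * d + 1

/-- The `m`-th power of a closed path. -/
def cpow {a : V} (T : Quiver.Path a a) : ℕ → Quiver.Path a a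
  | 0 => Quiver.Path.nil
  | n + 1 => (cpow T n).comp T

/-- The list of arrows of a path, in order. -/
def arrowList {a : V} : ∀ {b : V}, Quiver.Path a b → List (SArrow V)
  | _, Quiver.Path.nil => []
  | _, Quiver.Path.cons p e => arrowList p ++ [⟨_, _, e⟩]

/-- A closed trail: a nontrivial closed path with pairwise distinct arrows. -/
def IsClosedTrail {a : V} (T : Quiver.Path a a) : Prop :=
  1 ≤ T.length ∧ (arrowList T).Nodup

/-- `q` lies on the closed path `T`: `q` is a subpath of `T^m` for some `m ≥ 1`. -/
def LiesOn {x y a : V} (q : Quiver.Path x y) (T : Quiver.Path a a) : Prop :=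
  ∃ m : ℕ, 1 ≤ m ∧ IsSubpathP q (cpow T m)

/-- `ρ_T ⊆ ρ`: every path of length `d` lying on `T` belongs to `ρ`. -/
def RhoTSub (d : ℕ) (ρ : PathSet V) {a : V} (T : Quiver.Path a a) : Prop :=
  ∀ ⦃x y : V⦄ (q : Quiver.Path x y), q.length = d → LiesOn q T → ρ q

/-- `SegChain A L a b p` : the path `p` decomposes as the composite of the listed
segments, each of length `A`. -/
inductive SegChain (A : ℕ) : List (SPath V) → (a b : V) → Quiver.Path a b → Prop
  | nil (a : V) : SegChain A [] a a Quiver.Path.nil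
  | cons {a b c : V} (α : Quiver.Path a b) (hα : α.length = A) {p : Quiver.Path b c}
      {L : List (SPath V)} (hp : SegChain A L b c p) :
      SegChain A (⟨a, b, α⟩ :: L) a c (α.comp p)

/-- An `A`-path: a path which decomposes into segments of length `A`. -/
def IsAPath (A : ℕ) {a b : V} (p : Quiver.Path a b) : Prop :=
  ∃ L : List (SPath V), SegChain A L a b p

/-- `p` is an `A`-subpath of `q`: a subpath which is an `A`-path starting at a position
that is a multiple of `A`. -/
def IsASubpath (A : ℕ) {b c a e : V} (p : Quiver.Path b c) (q : Quiver.Path a e) : Prop :=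
  ∃ (u : Quiver.Path a b) (v : Quiver.Path c e),
    q = (u.comp p).comp v ∧ A ∣ u.length ∧ IsAPath A p

/-- A closed `A`-trail: a nontrivial closed `A`-path with pairwise distinct `A`-segments. -/
def IsClosedATrail (A : ℕ) {a : V} (T : Quiver.Path a a) : Prop :=
  ∃ L : List (SPath V), SegChain A L a a T ∧ L ≠ [] ∧ L.Nodup

/-- The `A`-path `q` lies on the closed `A`-path `T`: `q` is an `A`-subpath of `T^m` for
some `m ≥ 1`. -/
def ALiesOn (A : ℕ) {x y a : V} (q : Quiver.Path x y) (T : Quiver.Path a a) : Prop :=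
  ∃ m : ℕ, 1 ≤ m ∧ IsASubpath A q (cpow T m)

/-- `ρ_T ⊆ ρ` in the `(D,A)`-setting: every path of length `D` which lies on `T` as an
`A`-path belongs to `ρ`. -/
def ARhoTSub (D A : ℕ) (ρ : PathSet V) {a : V} (T : Quiver.Path a a) : Prop :=
  ∀ ⦃x y : V⦄ (q : Quiver.Path x y), q.length = D → ALiesOn A q T → ρ q

/-- The `(D,A)`-overlap property: every path in `ρ` has length `D`, and whenever
`R₂ ∈ ρ` properly overlaps `R₁ ∈ ρ` with overlap `R₁u`, then `ℓ(u) ≥ A` and some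
`R₃ ∈ ρ` properly overlaps `R₁` with overlap `R₁u'` where `ℓ(u') = A` and `u'` is a
prefix of `u`. -/
def DAOverlapProperty (D A : ℕ) (ρ : PathSet V) : Prop :=
  (∀ ⦃a b : V⦄ (p : Quiver.Path a b), ρ p → p.length = D) ∧
  ∀ ⦃a b x y : V⦄ (R₁ : Quiver.Path a b) (R₂ : Quiver.Path x y) (u : Quiver.Path b y),
    ρ R₁ → ρ R₂ → ProperlyOverlapsWith R₂ R₁ u →
    A ≤ u.length ∧
      ∃ (y' : V) (x' : V) (R₃ : Quiver.Path x' y') (u' : Quiver.Path b y'),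
        ρ R₃ ∧ ProperlyOverlapsWith R₃ R₁ u' ∧ u'.length = A ∧ IsPrefixP u' u

/-- Condition (C1), part (1), for a loop `α`. -/
def CondLoop (d : ℕ) (ρ : PathSet V) {v : V} (α : v ⟶ v) : Prop :=
  ρ (cpow (Quiver.Hom.toPath α) d) ∧
  (∀ ⦃w : V⦄ (β : v ⟶ w), (⟨v, w, β⟩ : SArrow V) ≠ ⟨v, v, α⟩ →
      ¬ ρ ((cpow (Quiver.Hom.toPath α) (d - 1)).comp (Quiver.Hom.toPath β))) ∧
  (∀ ⦃w : V⦄ (β : w ⟶ v), (⟨w, v, β⟩ : SArrow V) ≠ ⟨v, v, α⟩ →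
      ¬ ρ ((Quiver.Hom.toPath β).comp (cpow (Quiver.Hom.toPath α) (d - 1))))

/-- Condition (C1): (1) every loop `α` satisfies `α^d ∈ ρ` and no element of `ρ` has the
form `α^{d-1}β` or `βα^{d-1}` with `β` an arrow distinct from `α`; (2) for every closed
trail `T` with `ℓ(T) > 1` and `ρ_T ⊆ ρ`, no element of `ρ∖ρ_T` begins or ends with an
arrow of `T`. -/
def CondC1 (d : ℕ) (ρ : PathSet V) : Prop :=
  (∀ (v : V) (α : v ⟶ v), CondLoop d ρ α) ∧
  (∀ ⦃a : V⦄ (T : Quiver.Path a a), IsClosedTrail T → 1 < T.length → RhoTSub d ρ T →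
    ∀ ⦃x y : V⦄ (q : Quiver.Path x y), ρ q → ¬(q.length = d ∧ LiesOn q T) →
      (∀ ⦃w : V⦄ (e : x ⟶ w) (q' : Quiver.Path w y),
          q = (Quiver.Hom.toPath e).comp q' → (⟨x, w, e⟩ : SArrow V) ∉ arrowList T) ∧
      (∀ ⦃w : V⦄ (e : w ⟶ y) (q' : Quiver.Path x w),
          q = q'.comp (Quiver.Hom.toPath e) → (⟨w, y, e⟩ : SArrow V) ∉ arrowList T))

/-- Condition (C2): (1) for every `A`-loop `c`, some rotation `c'` of `c` satisfies
`c'^d ∈ ρ` and no element of `ρ` has the form `c'^{d-1}β` or `βc'^{d-1}` with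
`β` a path of length `A` distinct from `c'`; (2) for every closed `A`-trail `T` with at
least two segments and `ρ_T ⊆ ρ`, no element of `ρ∖ρ_T` begins or ends with an
`A`-segment of `T`. -/
def CondC2 (D A d : ℕ) (ρ : PathSet V) : Prop :=
  (∀ ⦃v : V⦄ (c : Quiver.Path v v), c.length = A →
    ∃ (w : V) (p : Quiver.Path v w) (q : Quiver.Path w v), c = p.comp q ∧ p.length < A ∧
      ρ (cpow (q.comp p) d) ∧
      (∀ ⦃x : V⦄ (β : Quiver.Path w x), β.length = A →
          (⟨w, x, β⟩ : SPath V) ≠ ⟨w, w, q.comp p⟩ →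
          ¬ ρ ((cpow (q.comp p) (d - 1)).comp β)) ∧
      (∀ ⦃x : V⦄ (β : Quiver.Path x w), β.length = A →
          (⟨x, w, β⟩ : SPath V) ≠ ⟨w, w, q.comp p⟩ →
          ¬ ρ (β.comp (cpow (q.comp p) (d - 1))))) ∧
  (∀ ⦃a : V⦄ (T : Quiver.Path a a) (L : List (SPath V)),
      SegChain A L a a T → L.Nodup → 2 ≤ L.length → ARhoTSub D A ρ T →
      ∀ ⦃x y : V⦄ (q : Quiver.Path x y), ρ q → ¬(q.length = D ∧ ALiesOn A q T) →
        (∀ ⦃w : V⦄ (α : Quiver.Path x w) (q' : Quiver.Path w y),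
            q = α.comp q' → (⟨x, w, α⟩ : SPath V) ∉ L) ∧
        (∀ ⦃w : V⦄ (α : Quiver.Path w y) (q' : Quiver.Path x w),
            q = q'.comp α → (⟨w, y, α⟩ : SPath V) ∉ L))

lemma cpow_length {a : V} (T : Quiver.Path a a) : ∀ n, (cpow T n).length = n * T.length
  | 0 => by simp [cpow]
  | n + 1 => by
      simp [cpow, Quiver.Path.length_comp, cpow_length T n, Nat.succ_mul]

lemma cpow_add {a : V} (T : Quiver.Path a a) (m : ℕ) :
    ∀ n, cpow T (m + n) = (cpow T m).comp (cpow T n)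
  | 0 => by simp [cpow]
  | n + 1 => by
      show cpow T (m + n + 1) = (cpow T m).comp ((cpow T n).comp T)
      rw [← Quiver.Path.comp_assoc, ← cpow_add T m n]; rfl

lemma cpow_mul {a : V} (T : Quiver.Path a a) (m : ℕ) :
    ∀ n, cpow T (m * n) = cpow (cpow T m) n
  | 0 => by simp [Nat.mul_zero, cpow]
  | n + 1 => by
      show cpow T (m * n + m) = (cpow (cpow T m) n).comp (cpow T m)
      rw [cpow_add, cpow_mul T m n]

lemma cpow_comm {a : V} (T : Quiver.Path a a) (n : ℕ) :
    (cpow T n).comp T = T.comp (cpow T n) := by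
  have h1 : cpow T (n + 1) = (cpow T n).comp T := rfl
  have h2 : cpow T (1 + n) = (cpow T 1).comp (cpow T n) := cpow_add T 1 n
  have h3 : cpow T 1 = T := by simp [cpow]
  rw [h3] at h2
  rw [← h1, Nat.add_comm, h2]

/-- if `c` is a closed path of length `A` with `c^d ∈ ρ`, then `c` is not
a proper power of a path. -/
theorem stmt_12 {V : Type u} [Quiver.{v + 1} V] [Fintype V] [∀ a b : V, Fintype (a ⟶ b)]
    (D A d : ℕ) (hd : 2 ≤ d) (hA : 1 ≤ A) (hD : D = d * A)
    (ρ : PathSet V) (hDA : DAOverlapProperty D A ρ)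
    {u : V} (c : Quiver.Path u u) (hc : c.length = A)
    (hcd : ρ (cpow c d)) :
    ¬ ∃ (p : Quiver.Path u u) (r : ℕ), 2 ≤ r ∧ c = cpow p r := by
  rintro ⟨p, r, hr, rfl⟩
  have hlen : r * p.length = A := by rw [← cpow_length]; exact hc
  have hp1 : 1 ≤ p.length := by
    rcases Nat.eq_zero_or_pos p.length with h | h
    · rw [h, Nat.mul_zero] at hlen; omega
    · exact h
  have h2p : 2 * p.length ≤ r * p.length := Nat.mul_le_mul_right _ hr
  have hAd : A ≤ d * A := Nat.le_mul_of_pos_left _ (by omega)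
  have hpow : cpow (cpow p r) d = cpow p (r * d) := (cpow_mul p r d).symm
  have hcomm : (cpow (cpow p r) d).comp p = p.comp (cpow (cpow p r) d) := by
    rw [hpow]; exact cpow_comm p (r * d)
  have hlenD : (cpow (cpow p r) d).length = d * A := by
    rw [cpow_length, hc]
  have hov : ProperlyOverlapsWith (cpow (cpow p r) d) (cpow (cpow p r) d) p :=
    ⟨p, hcomm, hp1, by rw [hlenD]; omega, hp1⟩
  have := (hDA.2 _ _ _ hcd hcd hov).1
  omega
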